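/- arXiv:1510.07596 — 4 statements merged into one kernel-verified Lean document; each statement's English description precedes it below -/
import Mathlib

section
/- Let m ≥ 1 and X ⊆ ℤ/2mℤ be a set containing no nontrivial 3-term arithmetic progressions in the integers {1,...,m}, and let 2X = {2x : x ∈ X} ⊆ ℤ/(5m)ℤ. If x < y < z are real numbers in [0,1) forming a 3-term arithmetic progression (y - x = z - y), each lying in an interval [j/(5m), (j+1)/(5m)) with j ∈ 2X, then all three points x, y, z lie in the same such interval. -/
/-- If `X ⊆ {1,…,m}` (as integers) has no nontrivial 3-term AP in the integers,
then any real 3-term AP `x < y < z` in `[0,1)` whose points each lie in an interval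
`[2a/(5m), (2a+1)/(5m))` with `a ∈ X` must lie in a single such interval. -/
theorem salem_no_ap_behrend_intervals
    (m : ℕ) (hm : 1 ≤ m) (X : Finset ℤ)
    (hX : ∀ a ∈ X, 1 ≤ a ∧ a ≤ (m : ℤ))
    (hAP : ∀ a ∈ X, ∀ b ∈ X, ∀ c ∈ X, a + c = 2 * b → a = c)
    (x y z : ℝ) (hxy : x < y) (hyz : y < z) (hap : x + z = 2 * y)
    (a b c : ℤ) (ha : a ∈ X) (hb : b ∈ X) (hc : c ∈ X)
    (hxI : x ∈ Set.Ico ((2 * a : ℝ) / (5 * m)) ((2 * a + 1 : ℝ) / (5 * m)))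
    (hyI : y ∈ Set.Ico ((2 * b : ℝ) / (5 * m)) ((2 * b + 1 : ℝ) / (5 * m)))
    (hzI : z ∈ Set.Ico ((2 * c : ℝ) / (5 * m)) ((2 * c + 1 : ℝ) / (5 * m))) :
    ∃ d ∈ X,
      x ∈ Set.Ico ((2 * d : ℝ) / (5 * m)) ((2 * d + 1 : ℝ) / (5 * m)) ∧
      y ∈ Set.Ico ((2 * d : ℝ) / (5 * m)) ((2 * d + 1 : ℝ) / (5 * m)) ∧
      z ∈ Set.Ico ((2 * d : ℝ) / (5 * m)) ((2 * d + 1 : ℝ) / (5 * m)) := by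
  have hM : (0:ℝ) < 5 * m := by positivity
  obtain ⟨hx1, hx2⟩ := hxI
  obtain ⟨hy1, hy2⟩ := hyI
  obtain ⟨hz1, hz2⟩ := hzI
  rw [div_le_iff₀ hM] at hx1 hy1 hz1
  rw [lt_div_iff₀ hM] at hx2 hy2 hz2
  -- derive a + c = 2 * b
  have h1 : (a + c : ℝ) < 2 * b + 1 := by nlinarith
  have h2 : (2 * b : ℝ) < a + c + 1 := by nlinarith
  have hacb : a + c = 2 * b := by
    have h1' : a + c ≤ 2 * b := by exact_mod_cast Int.lt_add_one_iff.mp (by exact_mod_cast h1)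
    have h2' : 2 * b ≤ a + c := by exact_mod_cast Int.lt_add_one_iff.mp (by exact_mod_cast h2)
    omega
  have hac : a = c := hAP a ha b hb c hc hacb
  have hba : b = a := by omega
  refine ⟨a, ha, ⟨by rw [div_le_iff₀ hM]; exact hx1, by rw [lt_div_iff₀ hM]; exact hx2⟩,
    ⟨?_, ?_⟩, ⟨?_, ?_⟩⟩
  · rw [div_le_iff₀ hM]; rw [hba] at hy1; exact_mod_cast hy1
  · rw [lt_div_iff₀ hM]; rw [hba] at hy2; exact_mod_cast hy2
  · rw [div_le_iff₀ hM]; rw [← hac] at hz1; exact_mod_cast hz1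
  · rw [lt_div_iff₀ hM]; rw [← hac] at hz2; exact_mod_cast hz2
end

section
/- For every ε > 0 there exists m₀ such that for all m ≥ m₀ there is a set X ⊆ {0,...,m-1} with |X| > m^{1-ε} such that X contains no nontrivial 3-term arithmetic progression modulo m (i.e., no a,b,c ∈ X, not all equal, with a + c ≡ 2b (mod m)). -/
open Real

/-- Behrend: for every `ε > 0` and every large enough `m` there is `X ⊆ {0,…,m-1}` with
`|X| > m^{1-ε}` and no nontrivial 3-term AP modulo `m`. -/
theorem behrend_no_ap_mod_m (ε : ℝ) (hε : 0 < ε) :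
    ∃ m₀ : ℕ, ∀ m : ℕ, m₀ ≤ m →
      ∃ X : Finset ℕ, X ⊆ Finset.range m ∧
        (X.card : ℝ) > (m : ℝ) ^ ((1 : ℝ) - ε) ∧
        ∀ a ∈ X, ∀ b ∈ X, ∀ c ∈ X, (a + c) % m = (2 * b) % m → a = b ∧ b = c := by
  set C : ℝ := max (25 / ε ^ 2) 25 with hC
  refine ⟨max 7 (⌈Real.exp C⌉₊ + 1), fun m hm => ?_⟩
  have hm7 : 7 ≤ m := le_trans (le_max_left _ _) hm
  have hmR : (7 : ℝ) ≤ m := by exact_mod_cast hm7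
  have hm0 : (0 : ℝ) < m := by linarith
  have hmC : Real.exp C < m := by
    have h1 : (⌈Real.exp C⌉₊ + 1 : ℕ) ≤ m := le_trans (le_max_right _ _) hm
    have h2 : (⌈Real.exp C⌉₊ : ℝ) < m := by
      exact_mod_cast lt_of_lt_of_le (Nat.lt_succ_self _) h1
    exact lt_of_le_of_lt (Nat.le_ceil _) h2
  set x := Real.log m with hx
  have hxC : C < x := by
    rw [hx, ← Real.log_exp C]
    exact Real.log_lt_log (Real.exp_pos _) hmC
  have hx25 : 25 < x := lt_of_le_of_lt (le_max_right _ _) hxC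
  have hx0 : 0 < x := by linarith
  -- √x > 5 and ε √x > 5
  have hs5 : 5 < Real.sqrt x := by
    have := Real.sqrt_lt_sqrt (by norm_num) hx25
    rwa [show (25 : ℝ) = 5 ^ 2 by norm_num, Real.sqrt_sq (by norm_num)] at this
  have hεs : 5 < ε * Real.sqrt x := by
    have h1 : 25 / ε ^ 2 < x := lt_of_le_of_lt (le_max_left _ _) hxC
    have h2 : Real.sqrt (25 / ε ^ 2) < Real.sqrt x :=
      Real.sqrt_lt_sqrt (by positivity) h1
    have h3 : Real.sqrt (25 / ε ^ 2) = 5 / ε := by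
      rw [show (25 : ℝ) / ε ^ 2 = (5 / ε) ^ 2 by field_simp; ring,
        Real.sqrt_sq (by positivity)]
    rw [h3] at h2
    calc (5 : ℝ) = ε * (5 / ε) := by field_simp
    _ < ε * Real.sqrt x := by exact mul_lt_mul_of_pos_left h2 hε
  -- key: ε x - 4 √x > log 3
  have hkey : Real.log 3 < ε * x - 4 * Real.sqrt x := by
    have hsx : Real.sqrt x * Real.sqrt x = x := Real.mul_self_sqrt hx0.le
    have h5 : (5 : ℝ) < Real.sqrt x * (ε * Real.sqrt x - 4) := by
      have h1 : (1 : ℝ) < ε * Real.sqrt x - 4 := by linarith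
      nlinarith
    have hlog3 : Real.log 3 ≤ 2 := by
      have := Real.log_le_sub_one_of_pos (show (0:ℝ) < 3 by norm_num)
      linarith
    nlinarith
  -- the set
  set n := m / 2 with hn
  obtain ⟨t, hts, htcard, htfree⟩ := rothNumberNat_spec n
  have hnm : n ≤ m := Nat.div_le_self _ _
  have h2n : 2 * n ≤ m := by omega
  have hn3 : 3 ≤ n := by omega
  refine ⟨t, hts.trans (Finset.range_subset_range.2 hnm), ?_, ?_⟩
  · -- cardinality bound
    have hroth : (n : ℝ) * Real.exp (-4 * Real.sqrt (Real.log n)) ≤ rothNumberNat n :=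
      Behrend.roth_lower_bound
    have hn0 : (0 : ℝ) < n := by exact_mod_cast (by omega : 0 < n)
    have hlogn : Real.log n ≤ x := Real.log_le_log hn0 (by exact_mod_cast hnm)
    have hlogn0 : 0 ≤ Real.log n := Real.log_nonneg (by exact_mod_cast hn3.trans' (by norm_num))
    have hexp : Real.exp (-4 * Real.sqrt x) ≤ Real.exp (-4 * Real.sqrt (Real.log n)) := by
      apply Real.exp_le_exp.2
      have := Real.sqrt_le_sqrt hlogn
      linarith
    have hn_ge : (m : ℝ) / 3 ≤ n := by
      have : m ≤ 2 * n + 1 := by omega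
      have h1 : (m : ℝ) ≤ 2 * n + 1 := by exact_mod_cast this
      have h3 : (3 : ℝ) ≤ n := by exact_mod_cast hn3
      linarith
    have hbig : (m : ℝ) ^ ((1 : ℝ) - ε) < (m : ℝ) / 3 * Real.exp (-4 * Real.sqrt x) := by
      have hrw : (m : ℝ) ^ ((1 : ℝ) - ε) = m * Real.exp (-(ε * x)) := by
        rw [Real.rpow_def_of_pos hm0, ← hx, show x * (1 - ε) = x + -(ε * x) by ring,
          Real.exp_add, hx, Real.exp_log hm0]
      rw [hrw]
      have h3 : (3 : ℝ) < Real.exp (ε * x - 4 * Real.sqrt x) := by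
        calc (3 : ℝ) = Real.exp (Real.log 3) := (Real.exp_log (by norm_num)).symm
        _ < _ := Real.exp_lt_exp.2 hkey
      have hpos : (0 : ℝ) < Real.exp (-(ε * x)) := Real.exp_pos _
      have hE : Real.exp (-(ε * x)) * Real.exp (ε * x - 4 * Real.sqrt x)
          = Real.exp (-4 * Real.sqrt x) := by
        rw [← Real.exp_add]; congr 1; ring
      rw [show (m : ℝ) / 3 * Real.exp (-4 * Real.sqrt x)
          = m * Real.exp (-(ε * x)) * (Real.exp (ε * x - 4 * Real.sqrt x) / 3) by
        linear_combination (-(m : ℝ) / 3) * hE]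
      have h1 : (1 : ℝ) < Real.exp (ε * x - 4 * Real.sqrt x) / 3 := by
        rw [lt_div_iff₀ (by norm_num : (0:ℝ) < 3)]; linarith
      have hP : (0 : ℝ) < m * Real.exp (-(ε * x)) := mul_pos hm0 hpos
      nlinarith [mul_lt_mul_of_pos_left h1 hP]
    calc (m : ℝ) ^ ((1 : ℝ) - ε) < (m : ℝ) / 3 * Real.exp (-4 * Real.sqrt x) := hbig
    _ ≤ (n : ℝ) * Real.exp (-4 * Real.sqrt x) := by
        apply mul_le_mul_of_nonneg_right hn_ge (Real.exp_pos _).le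
    _ ≤ (n : ℝ) * Real.exp (-4 * Real.sqrt (Real.log n)) := by
        apply mul_le_mul_of_nonneg_left hexp hn0.le
    _ ≤ rothNumberNat n := hroth
    _ = t.card := by exact_mod_cast htcard.symm
  · -- no nontrivial 3-AP mod m
    intro a ha b hb c hc habc
    have han : a < n := Finset.mem_range.1 (hts ha)
    have hbn : b < n := Finset.mem_range.1 (hts hb)
    have hcn : c < n := Finset.mem_range.1 (hts hc)
    have h1 : a + c < m := by omega
    have h2 : 2 * b < m := by omega
    rw [Nat.mod_eq_of_lt h1, Nat.mod_eq_of_lt h2] at habc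
    have hab : a = b := htfree (by exact_mod_cast ha) (by exact_mod_cast hb)
      (by exact_mod_cast hc) (by omega)
    exact ⟨hab, by omega⟩
end

section
/- Let f : [0,1] → ℂ be a finite linear combination of indicator functions of intervals of the form [a/Q, (a+1)/Q) with integer a, 0 ≤ a < Q. Then for all integers k, ℓ with ℓ ≠ 0 and k + Qℓ ≠ 0, f̂(k + Qℓ) = (k/(k + Qℓ)) · f̂(k), where f̂(n) = ∫₀¹ f(x) e^{-2πi n x} dx. -/
/-!
Integrating `exp (-2πi n x)` over `[s, t)` and multiplying by `-2πi n` gives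
`exp (-2πi n t) - exp (-2πi n s)`, for every `n` including `n = 0`. Hence
`-2πi n · f̂(n)` is a combination of the values `exp (-2πi n a / Q)`, which are `Q`-periodic in `n`;
dividing by `-2πi (k + Qℓ)` gives the claim.
-/

open scoped Real

/-- The `n`-th Fourier coefficient (on `ℝ/ℤ`) of a function on `[0,1]`. -/
noncomputable def fourierCoef01 (g : ℝ → ℂ) (n : ℤ) : ℂ :=
  ∫ x in (0 : ℝ)..1, g x * Complex.exp (-2 * π * Complex.I * n * x)

open MeasureTheory Set Complex

theorem intervalIntegral_indicator_Ico {E : Type*} [NormedAddCommGroup E] [NormedSpace ℝ E]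
    {μ : Measure ℝ} [NullSingletonClass μ] {a b s t : ℝ} (has : a ≤ s) (hst : s ≤ t) (htb : t ≤ b)
    (g : ℝ → E) : ∫ x in a..b, (Ico s t).indicator g x ∂μ = ∫ x in s..t, g x ∂μ := by
  have hae : (Ico s t ∩ Ioc a b : Set ℝ) =ᵐ[μ] Ioc s t := by
    rw [← inter_eq_left.2 (Ioc_subset_Ioc has htb)]
    exact ae_eq_set_inter Ico_ae_eq_Ioc (ae_eq_refl _)
  rw [intervalIntegral.integral_of_le (by linarith), intervalIntegral.integral_of_le hst,
    integral_indicator measurableSet_Ico, Measure.restrict_restrict measurableSet_Ico,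
    setIntegral_congr_set hae]

theorem mul_integral_exp_mul_complex (c : ℂ) (s t : ℝ) :
    c * ∫ x in s..t, exp (c * x) = exp (c * t) - exp (c * s) := by
  rcases eq_or_ne c 0 with rfl | hc
  · simp
  · rw [integral_exp_mul_complex hc, mul_div_cancel₀ _ hc]

theorem fourierCoef01_finset_sum {ι : Type*} (s : Finset ι) (c : ι → ℂ) (g : ι → ℝ → ℂ)
    (hg : ∀ i ∈ s, IntervalIntegrable (g i) volume 0 1) (n : ℤ) :
    fourierCoef01 (fun x => ∑ i ∈ s, c i * g i x) n = ∑ i ∈ s, c i * fourierCoef01 (g i) n := by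
  simp only [fourierCoef01, Finset.sum_mul, mul_assoc]
  rw [intervalIntegral.integral_finsetSum fun i hi =>
    ((hg i hi).mul_continuousOn (by fun_prop)).const_mul (c i)]
  simp only [intervalIntegral.integral_const_mul]

theorem intervalIntegrable_indicator_one_Ico (s t a b : ℝ) :
    IntervalIntegrable ((Ico s t).indicator (1 : ℝ → ℂ)) volume a b :=
  intervalIntegrable_iff.2 <| (integrableOn_const (by simp) (by simp)).indicator measurableSet_Ico

theorem mul_fourierCoef01_indicator_Ico {s t : ℝ} (hs : 0 ≤ s) (hst : s ≤ t) (ht : t ≤ 1)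
    (n : ℤ) :
    (-2 * π * I * n) * fourierCoef01 ((Ico s t).indicator 1) n
      = exp (-2 * π * I * n * t) - exp (-2 * π * I * n * s) := by
  have h : ∀ x : ℝ, (Ico s t).indicator 1 x * exp (-2 * π * I * n * x)
      = (Ico s t).indicator (fun x : ℝ => exp (-2 * π * I * n * x)) x := fun x => by
    by_cases hx : x ∈ Ico s t <;> simp [hx]
  simp only [fourierCoef01, h]
  rw [intervalIntegral_indicator_Ico hs hst ht, mul_integral_exp_mul_complex]

theorem cexp_neg_two_pi_I_add_of_mul_eq_int {n m j : ℤ} {x : ℝ} (h : (m : ℝ) * x = j) :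
    exp (-2 * π * I * ↑(n + m) * x) = exp (-2 * π * I * n * x) := by
  have h' : (m : ℂ) * x = j := by exact_mod_cast h
  rw [show -2 * π * I * ↑(n + m) * x = -2 * π * I * n * x + ↑(-j) * (2 * π * I) by
    push_cast; linear_combination (-2 * π * I) * h', exp_add, exp_int_mul_two_pi_mul_I, mul_one]

theorem mul_fourierCoef01_of_eq_sum_indicator_Ico (Q : ℕ) (c : ℕ → ℂ) (f : ℝ → ℂ)
    (hf : ∀ x, f x = ∑ a ∈ Finset.range Q,
      c a * (Ico ((a : ℝ) / Q) ((a + 1 : ℝ) / Q)).indicator 1 x) (n : ℤ) :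
    (-2 * π * I * n) * fourierCoef01 f n = ∑ a ∈ Finset.range Q,
      c a * (exp (-2 * π * I * n * ↑((a + 1 : ℝ) / Q))
        - exp (-2 * π * I * n * ↑((a : ℝ) / Q))) := by
  rw [funext hf,
    fourierCoef01_finset_sum _ _ _ fun _ _ => intervalIntegrable_indicator_one_Ico _ _ _ _,
    Finset.mul_sum]
  refine Finset.sum_congr rfl fun a ha => ?_
  have haQ : (a : ℝ) + 1 ≤ Q := by exact_mod_cast Finset.mem_range.1 ha
  rw [mul_left_comm, mul_fourierCoef01_indicator_Ico (by positivity) (by gcongr; linarith)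
    (div_le_one_of_le₀ haQ (Nat.cast_nonneg Q))]

theorem fourierCoef_step_function_shift_general
    (Q : ℕ) (c : ℕ → ℂ) (f : ℝ → ℂ)
    (hf : ∀ x, f x = ∑ a ∈ Finset.range Q,
      c a * (Set.Ico ((a : ℝ) / Q) ((a + 1 : ℝ) / Q)).indicator 1 x)
    (k ℓ : ℤ) (hkl : k + (Q : ℤ) * ℓ ≠ 0) :
    fourierCoef01 f (k + (Q : ℤ) * ℓ)
      = ((k : ℂ) / ((k : ℂ) + (Q : ℂ) * (ℓ : ℂ))) * fourierCoef01 f k := by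
  have hmul : (-2 * π * I * ↑(k + Q * ℓ)) * fourierCoef01 f (k + Q * ℓ)
      = (-2 * π * I * k) * fourierCoef01 f k := by
    rw [mul_fourierCoef01_of_eq_sum_indicator_Ico Q c f hf,
      mul_fourierCoef01_of_eq_sum_indicator_Ico Q c f hf]
    refine Finset.sum_congr rfl fun a ha => ?_
    have hQ : (Q : ℝ) ≠ 0 := Nat.cast_ne_zero.2 (Nat.ne_zero_of_lt (Finset.mem_range.1 ha))
    rw [cexp_neg_two_pi_I_add_of_mul_eq_int (j := ℓ * (a + 1)) (by push_cast; field_simp),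
      cexp_neg_two_pi_I_add_of_mul_eq_int (j := ℓ * a) (by push_cast; field_simp)]
  have hkl' : (k : ℂ) + Q * ℓ ≠ 0 := by exact_mod_cast hkl
  push_cast at hmul
  rw [div_mul_eq_mul_div, eq_div_iff hkl']
  apply mul_left_cancel₀ two_pi_I_ne_zero
  linear_combination -hmul

/-- If `f` is a finite linear combination of indicators of `Q`-adic intervals
`[a/Q, (a+1)/Q)`, then `f̂(k + Qℓ) = (k/(k+Qℓ)) f̂(k)`. -/
theorem fourierCoef_step_function_shift
    (Q : ℕ) (hQ : 1 ≤ Q) (c : ℕ → ℂ) (f : ℝ → ℂ)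
    (hf : ∀ x, f x = ∑ a ∈ Finset.range Q,
      c a * (Set.Ico ((a : ℝ) / Q) ((a + 1 : ℝ) / Q)).indicator 1 x)
    (k ℓ : ℤ) (hℓ : ℓ ≠ 0) (hkl : k + (Q : ℤ) * ℓ ≠ 0) :
    fourierCoef01 f (k + (Q : ℤ) * ℓ)
      = ((k : ℂ) / ((k : ℂ) + (Q : ℂ) * (ℓ : ℂ))) * fourierCoef01 f k :=
  fourierCoef_step_function_shift_general Q c f hf k ℓ hkl
end

section
/- Let M ≥ 2, t ∈ (0,1), and L be an integer with M^t < L < M. Define a sequence (L_n) by: L₁ = L, and L_{n+1} = L if L₁⋯L_n < M^{(n+1)t}, else L_{n+1} = 1. Then for all n ≥ 1, M^{nt} ≤ L₁⋯L_n < L·M^{nt}. -/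
/-- The recursively defined branching-number sequence satisfies
`M^{nt} ≤ L₁⋯L_n < L·M^{nt}`. -/
theorem branching_sequence_bounds
    (M L : ℕ) (hM : 2 ≤ M) (t : ℝ) (ht0 : 0 < t) (ht1 : t < 1)
    (hL1 : (M : ℝ) ^ t < (L : ℝ)) (hL2 : L < M)
    (Lseq : ℕ → ℕ) (h1 : Lseq 1 = L)
    (hrec : ∀ n : ℕ, 1 ≤ n → Lseq (n + 1) =
      if (∏ i ∈ Finset.Icc 1 n, (Lseq i : ℝ)) < (M : ℝ) ^ (((n : ℝ) + 1) * t)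
      then L else 1) :
    ∀ n : ℕ, 1 ≤ n →
      (M : ℝ) ^ ((n : ℝ) * t) ≤ (∏ i ∈ Finset.Icc 1 n, (Lseq i : ℝ)) ∧
      (∏ i ∈ Finset.Icc 1 n, (Lseq i : ℝ)) < (L : ℝ) * (M : ℝ) ^ ((n : ℝ) * t) := by
  have hM1 : (1 : ℝ) < (M : ℝ) := by exact_mod_cast lt_of_lt_of_le one_lt_two (by exact_mod_cast hM)
  have hM0 : (0 : ℝ) < (M : ℝ) := lt_trans one_pos hM1
  have hMt : (1 : ℝ) < (M : ℝ) ^ t := Real.one_lt_rpow_iff_of_pos hM0 |>.mpr (Or.inl ⟨hM1, ht0⟩)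
  have hMtpos : ∀ s : ℝ, (0:ℝ) < (M : ℝ) ^ s := fun s => Real.rpow_pos_of_pos hM0 s
  have hLpos : (0 : ℝ) < (L : ℝ) := lt_trans (hMtpos t) hL1
  intro n hn
  induction n with
  | zero => omega
  | succ m ih =>
    rcases Nat.eq_or_lt_of_le hn with h | h
    · -- m = 0, base case n = 1
      have hm : m = 0 := by omega
      subst hm
      simp only [Finset.Icc_self, Finset.prod_singleton, h1]
      push_cast
      rw [one_mul]
      constructor
      · linarith [hL1]
      · nlinarith [hL1, hMt]
    · have hm1 : 1 ≤ m := by omega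
      obtain ⟨ihl, ihu⟩ := ih hm1
      have hprod : (∏ i ∈ Finset.Icc 1 (m+1), (Lseq i : ℝ))
          = (∏ i ∈ Finset.Icc 1 m, (Lseq i : ℝ)) * (Lseq (m+1) : ℝ) := by
        rw [← Finset.prod_Icc_succ_top (by omega : 1 ≤ m + 1)]
      have hsplit : (M : ℝ) ^ (((m : ℝ) + 1) * t) = (M : ℝ) ^ ((m : ℝ) * t) * (M : ℝ) ^ t := by
        rw [← Real.rpow_add hM0]; ring_nf
      have hrecm := hrec m hm1
      push_cast
      rw [hprod, hrecm]
      split_ifs with hc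
      · rw [hsplit] at hc ⊢
        constructor
        · nlinarith [hMtpos ((m:ℝ)*t)]
        · nlinarith [hMtpos ((m:ℝ)*t), hMtpos t]
      · push_neg at hc
        rw [hsplit] at hc ⊢
        simp only [Nat.cast_one, mul_one]
        constructor
        · exact hc
        · nlinarith [hMtpos ((m:ℝ)*t), hMtpos t]
end
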